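/- Let Ω ⊆ ℝ^5 be open and let u, v, w : Ω → ℝ be smooth. On Ω × (ℝ \ {0}) (with coordinates x^1,…,x^5, λ) define the vector fields Y₁ = λ∂₁ − u₁∂₃ − v₁∂₄ + λw₁∂_λ, Y₂ = λ∂₂ − u₂∂₃ − v₂∂₄ + λw₂∂_λ, Y₃ = ∂₅ + u₄∂₃ + (v₄ + w − λ)∂₄ − λw₄∂_λ. Then the brackets [Y_a, Y_b](x, λ) lie in the linear span of {Y₁(x,λ), Y₂(x,λ), Y₃(x,λ)} for all a, b ∈ {1,2,3}, every x ∈ Ω and every λ ≠ 0, if and only if the following nine equations hold on Ω: R₁(u) = u₁w₂ − u₂w₁, R₁(v) = v₁w₂ − v₂w₁, R₁(w) = 0, R₂(u) = u₁w₄, R₂(v) = −u₁w₃, R₂(w) = w₁w₄, R₃(u) = u₂w₄, R₃(v) = −u₂w₃, R₃(w) = w₂w₄, where R₁ = u₁∂₂∂₃ + v₁∂₂∂₄ − u₂∂₁∂₃ − v₂∂₁∂₄, R₂ = u₁∂₃∂₄ + v₁∂₄² − ∂₁∂₅ − u₄∂₁∂₃ − (v₄+w)∂₁∂₄, R₃ =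 u₂∂₃∂₄ + v₂∂₄² − ∂₂∂₅ − u₄∂₂∂₃ − (v₄+w)∂₂∂₄. -/

import Mathlib

/-- The `i`-th standard coordinate (basis) vector of `ℝᵐ`. -/
noncomputable def e (m : ℕ) (i : Fin m) : Fin m → ℝ := Pi.single i 1

/-- Partial derivative `∂f/∂xⁱ` of a scalar function on `ℝᵐ`. -/
noncomputable def pd (m : ℕ) (f : (Fin m → ℝ) → ℝ) (i : Fin m) (x : Fin m → ℝ) : ℝ :=
  fderiv ℝ f x (e m i)

/-- Second partial derivative `∂²f/∂xⁱ∂xʲ`. -/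
noncomputable def pd2 (m : ℕ) (f : (Fin m → ℝ) → ℝ) (i j : Fin m) (x : Fin m → ℝ) : ℝ :=
  pd m (fun y => pd m f i y) j x

/-- Lie bracket of vector fields on (an open subset of) `ℝᵐ`:
`[X,Y](x) = DY(x)·X(x) − DX(x)·Y(x)`. -/
noncomputable def vbr (m : ℕ) (X Y : (Fin m → ℝ) → (Fin m → ℝ)) (x : Fin m → ℝ) :
    Fin m → ℝ :=
  fderiv ℝ Y x (X x) - fderiv ℝ X x (Y x)

/-- Projection from `ℝ⁶ = Ω × (ℝ∖{0})` (coordinates `x¹,…,x⁵,λ`) to `ℝ⁵`. -/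
noncomputable def proj56 (z : Fin 6 → ℝ) : Fin 5 → ℝ := fun i => z i.castSucc

/-- The Lax fields `Y₁ = λ∂₁ − u₁∂₃ − v₁∂₄ + λw₁∂_λ`,
`Y₂ = λ∂₂ − u₂∂₃ − v₂∂₄ + λw₂∂_λ`, `Y₃ = ∂₅ + u₄∂₃ + (v₄+w−λ)∂₄ − λw₄∂_λ`
(coordinates `x¹,…,x⁵` indexed by `0,…,4`, `λ` by `5`). -/
noncomputable def Yf (u v w : (Fin 5 → ℝ) → ℝ) :
    Fin 3 → (Fin 6 → ℝ) → (Fin 6 → ℝ) :=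
  ![fun z => z 5 • e 6 0 - pd 5 u 0 (proj56 z) • e 6 2 - pd 5 v 0 (proj56 z) • e 6 3
      + (z 5 * pd 5 w 0 (proj56 z)) • e 6 5,
    fun z => z 5 • e 6 1 - pd 5 u 1 (proj56 z) • e 6 2 - pd 5 v 1 (proj56 z) • e 6 3
      + (z 5 * pd 5 w 1 (proj56 z)) • e 6 5,
    fun z => e 6 4 + pd 5 u 3 (proj56 z) • e 6 2
      + (pd 5 v 3 (proj56 z) + w (proj56 z) - z 5) • e 6 3
      - (z 5 * pd 5 w 3 (proj56 z)) • e 6 5]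

/-- `R₁ = u₁∂₂∂₃ + v₁∂₂∂₄ − u₂∂₁∂₃ − v₂∂₁∂₄`. -/
noncomputable def R1op (u v f : (Fin 5 → ℝ) → ℝ) (x : Fin 5 → ℝ) : ℝ :=
  pd 5 u 0 x * pd2 5 f 1 2 x + pd 5 v 0 x * pd2 5 f 1 3 x
  - pd 5 u 1 x * pd2 5 f 0 2 x - pd 5 v 1 x * pd2 5 f 0 3 x

/-- `R₂ = u₁∂₃∂₄ + v₁∂₄² − ∂₁∂₅ − u₄∂₁∂₃ − (v₄+w)∂₁∂₄`. -/
noncomputable def R2op (u v w f : (Fin 5 → ℝ) → ℝ) (x : Fin 5 → ℝ) : ℝ :=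
  pd 5 u 0 x * pd2 5 f 2 3 x + pd 5 v 0 x * pd2 5 f 3 3 x - pd2 5 f 0 4 x
  - pd 5 u 3 x * pd2 5 f 0 2 x - (pd 5 v 3 x + w x) * pd2 5 f 0 3 x

/-- `R₃ = u₂∂₃∂₄ + v₂∂₄² − ∂₂∂₅ − u₄∂₂∂₃ − (v₄+w)∂₂∂₄`. -/
noncomputable def R3op (u v w f : (Fin 5 → ℝ) → ℝ) (x : Fin 5 → ℝ) : ℝ :=
  pd 5 u 1 x * pd2 5 f 2 3 x + pd 5 v 1 x * pd2 5 f 3 3 x - pd2 5 f 1 4 x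
  - pd 5 u 3 x * pd2 5 f 1 2 x - (pd 5 v 3 x + w x) * pd2 5 f 1 3 x

/-!
Each bracket `[Y_a, Y_b]` is a combination of the `Y`'s plus a vector `α ∂₃ + β ∂₄ + γ ∂_λ`
whose coefficients are, up to sign and a factor `λ`, the differences of the two sides of three
of the nine equations (this uses the symmetry of second derivatives). Along `∂₁, ∂₂, ∂₅` the
fields `Y₁, Y₂, Y₃` have components `(λ,0,0), (0,λ,0), (0,0,1)`, so for `λ ≠ 0` their span meets
`⟨∂₃, ∂₄, ∂_λ⟩` only in `0`: involutivity holds iff all these coefficients vanish.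
-/

section PartialDerivatives

variable {m : ℕ} {f : (Fin m → ℝ) → ℝ} {x : Fin m → ℝ}

lemma differentiableAt_pd (hf : ContDiffAt ℝ 2 f x) (i : Fin m) :
    DifferentiableAt ℝ (pd m f i) x :=
  ((hf.fderiv_right (m := 1) (by norm_num)).differentiableAt (by norm_num)).clm_apply
    (differentiableAt_const _)

lemma pd2_comm (hf : ContDiffAt ℝ 2 f x) (i j : Fin m) : pd2 m f i j x = pd2 m f j i x := by
  have hsymm : IsSymmSndFDerivAt ℝ f x :=
    hf.isSymmSndFDerivAt (by simp [minSmoothness_of_isRCLikeNormedField])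
  have hdf : DifferentiableAt ℝ (fderiv ℝ f) x :=
    (hf.fderiv_right (m := 1) (by norm_num)).differentiableAt (by norm_num)
  have hpd2 : ∀ i j, pd2 m f i j x = fderiv ℝ (fderiv ℝ f) x (e m j) (e m i) := fun i j => by
    simp [pd2, pd, fderiv_clm_apply hdf (differentiableAt_const _)]
  rw [hpd2, hpd2, hsymm]

@[simp] lemma pd_pd (i j : Fin m) : pd m (pd m f i) j x = pd2 m f i j x := rfl

end PartialDerivatives

lemma vbr_self {m : ℕ} (X : (Fin m → ℝ) → (Fin m → ℝ)) (x : Fin m → ℝ) : vbr m X X x = 0 :=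
  sub_self _

lemma vbr_comm {m : ℕ} (X Y : (Fin m → ℝ) → (Fin m → ℝ)) (x : Fin m → ℝ) :
    vbr m X Y x = -vbr m Y X x :=
  (neg_sub _ _).symm

lemma forall_vbr_mem_iff {m : ℕ} {X : Fin 3 → (Fin m → ℝ) → (Fin m → ℝ)} {x : Fin m → ℝ}
    {S : Submodule ℝ (Fin m → ℝ)} :
    (∀ a b, vbr m (X a) (X b) x ∈ S) ↔
      vbr m (X 0) (X 1) x ∈ S ∧ vbr m (X 0) (X 2) x ∈ S ∧ vbr m (X 1) (X 2) x ∈ S := by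
  refine ⟨fun h => ⟨h 0 1, h 0 2, h 1 2⟩, fun ⟨h01, h02, h12⟩ a b => ?_⟩
  fin_cases a <;> fin_cases b <;>
    first
    | exact vbr_self _ x ▸ S.zero_mem
    | assumption
    | exact (vbr_comm _ _ x).symm ▸ S.neg_mem ‹_›

section LaxFields

variable {u v w : (Fin 5 → ℝ) → ℝ} {z : Fin 6 → ℝ}

noncomputable def projL : (Fin 6 → ℝ) →L[ℝ] (Fin 5 → ℝ) :=
  ContinuousLinearMap.pi fun i : Fin 5 => ContinuousLinearMap.proj i.castSucc

noncomputable def fderivCompProj56 (g : (Fin 5 → ℝ) → ℝ) (x : Fin 5 → ℝ) : (Fin 6 → ℝ) →L[ℝ] ℝ :=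
  (fderiv ℝ g x).comp projL

lemma hasFDerivAt_comp_proj56 {g : (Fin 5 → ℝ) → ℝ} (hg : DifferentiableAt ℝ g (proj56 z)) :
    HasFDerivAt (fun z => g (proj56 z)) (fderivCompProj56 g (proj56 z)) z :=
  hg.hasFDerivAt.comp z projL.hasFDerivAt

lemma fderivCompProj56_apply (g : (Fin 5 → ℝ) → ℝ) (x : Fin 5 → ℝ) (y : Fin 6 → ℝ) :
    fderivCompProj56 g x y = ∑ k : Fin 5, y k.castSucc * pd 5 g k x := by
  have hy : projL y = ∑ k : Fin 5, y k.castSucc • e 5 k := by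
    funext j
    simp [projL, e, Finset.sum_apply, Pi.single_apply]
  simp [fderivCompProj56, hy, pd]

noncomputable def fderivYf (u v w : (Fin 5 → ℝ) → ℝ) (z : Fin 6 → ℝ) :
    Fin 3 → (Fin 6 → ℝ) →L[ℝ] (Fin 6 → ℝ) :=
  let x := proj56 z
  let lam : (Fin 6 → ℝ) →L[ℝ] ℝ := ContinuousLinearMap.proj 5
  ![lam.smulRight (e 6 0) - (fderivCompProj56 (pd 5 u 0) x).smulRight (e 6 2)
      - (fderivCompProj56 (pd 5 v 0) x).smulRight (e 6 3)
      + (z 5 • fderivCompProj56 (pd 5 w 0) x + pd 5 w 0 x • lam).smulRight (e 6 5),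
    lam.smulRight (e 6 1) - (fderivCompProj56 (pd 5 u 1) x).smulRight (e 6 2)
      - (fderivCompProj56 (pd 5 v 1) x).smulRight (e 6 3)
      + (z 5 • fderivCompProj56 (pd 5 w 1) x + pd 5 w 1 x • lam).smulRight (e 6 5),
    (fderivCompProj56 (pd 5 u 3) x).smulRight (e 6 2)
      + (fderivCompProj56 (pd 5 v 3) x + fderivCompProj56 w x - lam).smulRight (e 6 3)
      - (z 5 • fderivCompProj56 (pd 5 w 3) x + pd 5 w 3 x • lam).smulRight (e 6 5)]

lemma hasFDerivAt_Yf (hu : ContDiffAt ℝ 2 u (proj56 z)) (hv : ContDiffAt ℝ 2 v (proj56 z))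
    (hw : ContDiffAt ℝ 2 w (proj56 z)) (a : Fin 3) :
    HasFDerivAt (Yf u v w a) (fderivYf u v w z a) z := by
  have hlam := hasFDerivAt_apply (𝕜 := ℝ) 5 z
  have hpd := fun (g : (Fin 5 → ℝ) → ℝ) (hg : ContDiffAt ℝ 2 g (proj56 z)) (i : Fin 5) =>
    hasFDerivAt_comp_proj56 (differentiableAt_pd hg i)
  fin_cases a
  · exact (((hlam.smul_const (e 6 0)).sub ((hpd u hu 0).smul_const (e 6 2))).sub
      ((hpd v hv 0).smul_const (e 6 3))).add ((hlam.mul (hpd w hw 0)).smul_const (e 6 5))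
  · exact (((hlam.smul_const (e 6 1)).sub ((hpd u hu 1).smul_const (e 6 2))).sub
      ((hpd v hv 1).smul_const (e 6 3))).add ((hlam.mul (hpd w hw 1)).smul_const (e 6 5))
  · have h := (((hasFDerivAt_const (e 6 4) z).add ((hpd u hu 3).smul_const (e 6 2))).add
      ((((hpd v hv 3).add (hasFDerivAt_comp_proj56 (hw.differentiableAt (by norm_num)))).sub
        hlam).smul_const (e 6 3))).sub ((hlam.mul (hpd w hw 3)).smul_const (e 6 5))
    rw [zero_add] at h
    exact h

/-- The vector `α ∂₃ + β ∂₄ + γ ∂_λ`. -/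
noncomputable def ver (α β γ : ℝ) : Fin 6 → ℝ := α • e 6 2 + β • e 6 3 + γ • e 6 5

lemma vbr_Yf_zero_one (hu : ContDiffAt ℝ 2 u (proj56 z)) (hv : ContDiffAt ℝ 2 v (proj56 z))
    (hw : ContDiffAt ℝ 2 w (proj56 z)) :
    let x := proj56 z
    vbr 6 (Yf u v w 0) (Yf u v w 1) z =
      ver (R1op u v u x - (pd 5 u 0 x * pd 5 w 1 x - pd 5 u 1 x * pd 5 w 0 x))
        (R1op u v v x - (pd 5 v 0 x * pd 5 w 1 x - pd 5 v 1 x * pd 5 w 0 x))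
        (-(z 5 * R1op u v w x))
      + (pd 5 w 0 x • Yf u v w 1 z - pd 5 w 1 x • Yf u v w 0 z) := by
  rw [vbr, (hasFDerivAt_Yf hu hv hw 0).fderiv, (hasFDerivAt_Yf hu hv hw 1).fderiv]
  funext j
  fin_cases j <;>
    simp [fderivYf, Yf, ver, fderivCompProj56_apply, Fin.sum_univ_five, e, R1op,
      pd2_comm hu 1 0, pd2_comm hv 1 0, pd2_comm hw 1 0] <;> ring

lemma vbr_Yf_zero_two (hu : ContDiffAt ℝ 2 u (proj56 z)) (hv : ContDiffAt ℝ 2 v (proj56 z))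
    (hw : ContDiffAt ℝ 2 w (proj56 z)) :
    let x := proj56 z
    vbr 6 (Yf u v w 0) (Yf u v w 2) z =
      ver (-(R2op u v w u x - pd 5 u 0 x * pd 5 w 3 x))
        (-(R2op u v w v x - -(pd 5 u 0 x * pd 5 w 2 x)))
        (z 5 * (R2op u v w w x - pd 5 w 0 x * pd 5 w 3 x))
      + pd 5 w 3 x • Yf u v w 0 z := by
  rw [vbr, (hasFDerivAt_Yf hu hv hw 0).fderiv, (hasFDerivAt_Yf hu hv hw 2).fderiv]
  funext j
  fin_cases j <;>
    simp [fderivYf, Yf, ver, fderivCompProj56_apply, Fin.sum_univ_five, e, R2op,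
      pd2_comm hu 3 0, pd2_comm hv 3 0, pd2_comm hw 3 0,
      pd2_comm hu 3 2, pd2_comm hv 3 2, pd2_comm hw 3 2] <;> ring

lemma vbr_Yf_one_two (hu : ContDiffAt ℝ 2 u (proj56 z)) (hv : ContDiffAt ℝ 2 v (proj56 z))
    (hw : ContDiffAt ℝ 2 w (proj56 z)) :
    let x := proj56 z
    vbr 6 (Yf u v w 1) (Yf u v w 2) z =
      ver (-(R3op u v w u x - pd 5 u 1 x * pd 5 w 3 x))
        (-(R3op u v w v x - -(pd 5 u 1 x * pd 5 w 2 x)))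
        (z 5 * (R3op u v w w x - pd 5 w 1 x * pd 5 w 3 x))
      + pd 5 w 3 x • Yf u v w 1 z := by
  rw [vbr, (hasFDerivAt_Yf hu hv hw 1).fderiv, (hasFDerivAt_Yf hu hv hw 2).fderiv]
  funext j
  fin_cases j <;>
    simp [fderivYf, Yf, ver, fderivCompProj56_apply, Fin.sum_univ_five, e, R3op,
      pd2_comm hu 3 1, pd2_comm hv 3 1, pd2_comm hw 3 1,
      pd2_comm hu 3 2, pd2_comm hv 3 2, pd2_comm hw 3 2] <;> ring

lemma ver_mem_span_Yf_iff (hz : z 5 ≠ 0) {α β γ : ℝ} :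
    ver α β γ ∈ Submodule.span ℝ ({Yf u v w 0 z, Yf u v w 1 z, Yf u v w 2 z} : Set (Fin 6 → ℝ))
      ↔ α = 0 ∧ β = 0 ∧ γ = 0 := by
  refine ⟨fun h => ?_, fun ⟨hα, hβ, hγ⟩ => by simp [ver, hα, hβ, hγ]⟩
  obtain ⟨a, b, c, h⟩ := Submodule.mem_span_triple.1 h
  have ha : a * z 5 = 0 := by simpa [Yf, ver, e] using congrFun h 0
  have hb : b * z 5 = 0 := by simpa [Yf, ver, e] using congrFun h 1
  have hc : c = 0 := by simpa [Yf, ver, e] using congrFun h 4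
  obtain rfl : a = 0 := (mul_eq_zero.1 ha).resolve_right hz
  obtain rfl : b = 0 := (mul_eq_zero.1 hb).resolve_right hz
  subst hc
  have h0 : ver α β γ = 0 := by simpa using h.symm
  exact ⟨by simpa [ver, e] using congrFun h0 2, by simpa [ver, e] using congrFun h0 3,
    by simpa [ver, e] using congrFun h0 5⟩

def AltTriple (u v w : (Fin 5 → ℝ) → ℝ) (x : Fin 5 → ℝ) : Prop :=
  R1op u v u x = pd 5 u 0 x * pd 5 w 1 x - pd 5 u 1 x * pd 5 w 0 x
  ∧ R1op u v v x = pd 5 v 0 x * pd 5 w 1 x - pd 5 v 1 x * pd 5 w 0 x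
  ∧ R1op u v w x = 0
  ∧ R2op u v w u x = pd 5 u 0 x * pd 5 w 3 x
  ∧ R2op u v w v x = -(pd 5 u 0 x * pd 5 w 2 x)
  ∧ R2op u v w w x = pd 5 w 0 x * pd 5 w 3 x
  ∧ R3op u v w u x = pd 5 u 1 x * pd 5 w 3 x
  ∧ R3op u v w v x = -(pd 5 u 1 x * pd 5 w 2 x)
  ∧ R3op u v w w x = pd 5 w 1 x * pd 5 w 3 x

theorem forall_vbr_Yf_mem_span_iff (hu : ContDiffAt ℝ 2 u (proj56 z))
    (hv : ContDiffAt ℝ 2 v (proj56 z)) (hw : ContDiffAt ℝ 2 w (proj56 z)) (hz : z 5 ≠ 0) :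
    (∀ a b : Fin 3, vbr 6 (Yf u v w a) (Yf u v w b) z ∈
        Submodule.span ℝ ({Yf u v w 0 z, Yf u v w 1 z, Yf u v w 2 z} : Set (Fin 6 → ℝ)))
      ↔ AltTriple u v w (proj56 z) := by
  set S := Submodule.span ℝ ({Yf u v w 0 z, Yf u v w 1 z, Yf u v w 2 z} : Set (Fin 6 → ℝ))
  have hY0 : Yf u v w 0 z ∈ S := Submodule.subset_span (by simp)
  have hY1 : Yf u v w 1 z ∈ S := Submodule.subset_span (by simp)
  rw [forall_vbr_mem_iff, vbr_Yf_zero_one hu hv hw, vbr_Yf_zero_two hu hv hw,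
    vbr_Yf_one_two hu hv hw,
    S.add_mem_iff_left (S.sub_mem (S.smul_mem _ hY1) (S.smul_mem _ hY0)),
    S.add_mem_iff_left (S.smul_mem _ hY0), S.add_mem_iff_left (S.smul_mem _ hY1),
    ver_mem_span_Yf_iff hz, ver_mem_span_Yf_iff hz, ver_mem_span_Yf_iff hz]
  simp only [AltTriple, neg_eq_zero, mul_eq_zero, hz, false_or, sub_eq_zero]
  tauto

lemma exists_proj56_eq (x : Fin 5 → ℝ) : ∃ z : Fin 6 → ℝ, proj56 z = x ∧ z 5 = 1 :=
  ⟨Fin.snoc x 1, funext fun _ => Fin.snoc_castSucc (α := fun _ => ℝ) .., Fin.snoc_last _ _⟩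

end LaxFields

/-- Theorem 2 (Lax content): the distribution `⟨Y₁,Y₂,Y₃⟩` is involutive iff the
system (alttriple) of the hierarchy of conformal self-duality equations holds. -/
theorem stmt_11 (Ω : Set (Fin 5 → ℝ)) (hΩ : IsOpen Ω)
    (u v w : (Fin 5 → ℝ) → ℝ)
    (hu : ContDiffOn ℝ (⊤:ℕ∞) u Ω) (hv : ContDiffOn ℝ (⊤:ℕ∞) v Ω)
    (hw : ContDiffOn ℝ (⊤:ℕ∞) w Ω) :
    (∀ z : Fin 6 → ℝ, proj56 z ∈ Ω → z 5 ≠ 0 → ∀ a b : Fin 3,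
        vbr 6 (Yf u v w a) (Yf u v w b) z ∈
          Submodule.span ℝ
            ({Yf u v w 0 z, Yf u v w 1 z, Yf u v w 2 z} : Set (Fin 6 → ℝ))) ↔
      (∀ x ∈ Ω,
        R1op u v u x = pd 5 u 0 x * pd 5 w 1 x - pd 5 u 1 x * pd 5 w 0 x
        ∧ R1op u v v x = pd 5 v 0 x * pd 5 w 1 x - pd 5 v 1 x * pd 5 w 0 x
        ∧ R1op u v w x = 0
        ∧ R2op u v w u x = pd 5 u 0 x * pd 5 w 3 x
        ∧ R2op u v w v x = -(pd 5 u 0 x * pd 5 w 2 x)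
        ∧ R2op u v w w x = pd 5 w 0 x * pd 5 w 3 x
        ∧ R3op u v w u x = pd 5 u 1 x * pd 5 w 3 x
        ∧ R3op u v w v x = -(pd 5 u 1 x * pd 5 w 2 x)
        ∧ R3op u v w w x = pd 5 w 1 x * pd 5 w 3 x) := by
  have hC2 : ∀ {g : (Fin 5 → ℝ) → ℝ}, ContDiffOn ℝ (⊤:ℕ∞) g Ω → ∀ x ∈ Ω, ContDiffAt ℝ 2 g x :=
    fun hg x hx => (hg.contDiffAt (hΩ.mem_nhds hx)).of_le (by norm_cast)
  change _ ↔ ∀ x ∈ Ω, AltTriple u v w x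
  constructor
  · intro h x hx
    obtain ⟨z, rfl, hz⟩ := exists_proj56_eq x
    exact (forall_vbr_Yf_mem_span_iff (hC2 hu _ hx) (hC2 hv _ hx) (hC2 hw _ hx)
      (by simp [hz])).1 (h z hx (by simp [hz]))
  · intro h z hx hz
    exact (forall_vbr_Yf_mem_span_iff (hC2 hu _ hx) (hC2 hv _ hx) (hC2 hw _ hx) hz).2 (h _ hx)
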